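/- Let ρ and σ be single-qubit states with Bloch vectors x_ρ, x_σ of lengths r_ρ < 1 and r_σ < 1 respectively. Then the quantum relative entropy (base 2) equals S(ρ‖σ) = ½[ r_ρ log₂((1+r_ρ)/(1−r_ρ)) + log₂((1−r_ρ²)/(1−r_σ²)) − ((x_ρ·x_σ)/r_σ) log₂((1+r_σ)/(1−r_σ)) ]. -/

import Mathlib

open Matrix

def pauliX : Matrix (Fin 2) (Fin 2) ℂ := !![0, 1; 1, 0]
def pauliY : Matrix (Fin 2) (Fin 2) ℂ := !![0, -Complex.I; Complex.I, 0]
def pauliZ : Matrix (Fin 2) (Fin 2) ℂ := !![1, 0; 0, -1]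

/-- `bloch a x = ½ (a I + x₁ X + x₂ Y + x₃ Z)`. -/
noncomputable def bloch (a : ℝ) (x : Fin 3 → ℝ) : Matrix (Fin 2) (Fin 2) ℂ :=
  (1 / 2 : ℂ) • ((a : ℂ) • (1 : Matrix (Fin 2) (Fin 2) ℂ)
    + (x 0 : ℂ) • pauliX + (x 1 : ℂ) • pauliY + (x 2 : ℂ) • pauliZ)
/-- Matrix logarithm of a Hermitian matrix via its spectral decomposition. -/
noncomputable def matLog (A : Matrix (Fin 2) (Fin 2) ℂ) : Matrix (Fin 2) (Fin 2) ℂ :=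
  if hA : A.IsHermitian then
    (hA.eigenvectorUnitary : Matrix (Fin 2) (Fin 2) ℂ) *
      Matrix.diagonal (fun i => (Real.log (hA.eigenvalues i) : ℂ)) *
      star (hA.eigenvectorUnitary : Matrix (Fin 2) (Fin 2) ℂ)
  else 0

/-- Quantum relative entropy in base 2, `Tr(ρ log₂ ρ) − Tr(ρ log₂ σ)`,
for states of full support. -/
noncomputable def qRelEnt (ρ σ : Matrix (Fin 2) (Fin 2) ℂ) : ℝ :=
  (ρ * (matLog ρ - matLog σ)).trace.re / Real.log 2

open Real

/-! The Bloch matrix `bloch 1 x` has trace `1` and determinant `(1 - r²)/4`, so its eigenvalues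
are `(1 ± r)/2`, whose logarithms are `(log ((1 - r²)/4) ± log ((1 + r)/(1 - r)))/2`. This gives
`Tr(ρ log ρ)` directly. When `r_σ > 0`, `log` agrees on the two-point spectrum of `σ` with an affine
function, so `log σ = α + β σ` and `Tr(ρ log σ) = α + β Tr(ρσ) = α + β (1 + x_ρ · x_σ)/2`. -/

lemma bloch_one_eq (x : Fin 3 → ℝ) : bloch 1 x =
    !![(1 + (x 2 : ℂ)) / 2, ((x 0 : ℂ) - Complex.I * x 1) / 2;
       ((x 0 : ℂ) + Complex.I * x 1) / 2, (1 - (x 2 : ℂ)) / 2] := by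
  ext i j
  fin_cases i <;> fin_cases j <;>
    simp [bloch, pauliX, pauliY, pauliZ] <;> ring

lemma bloch_one_isHermitian (x : Fin 3 → ℝ) : (bloch 1 x).IsHermitian := by
  rw [Matrix.IsHermitian, bloch_one_eq]
  ext i j
  fin_cases i <;> fin_cases j <;>
    simp [Matrix.conjTranspose_apply, Complex.ext_iff]

lemma trace_bloch_one (x : Fin 3 → ℝ) : (bloch 1 x).trace = 1 := by
  rw [bloch_one_eq, Matrix.trace_fin_two]
  simp only [of_apply, cons_val', cons_val_zero, cons_val_fin_one, cons_val_one]
  ring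

lemma det_bloch_one (x : Fin 3 → ℝ) :
    (bloch 1 x).det = ((1 - ∑ i, x i ^ 2 : ℝ) : ℂ) / 4 := by
  rw [bloch_one_eq, Matrix.det_fin_two]
  simp [Fin.sum_univ_three, Complex.ext_iff, -Complex.ofReal_pow]
  constructor <;> ring

lemma trace_bloch_one_mul_bloch_one (x y : Fin 3 → ℝ) :
    (bloch 1 x * bloch 1 y).trace = ((1 + ∑ i, x i * y i : ℝ) : ℂ) / 2 := by
  rw [bloch_one_eq, bloch_one_eq, Matrix.trace_fin_two]
  simp [Matrix.mul_apply, Fin.sum_univ_two, Fin.sum_univ_three, Complex.ext_iff]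
  constructor <;> ring

lemma Matrix.IsHermitian.trace_cfc {𝕜 n : Type*} [RCLike 𝕜] [Fintype n] [DecidableEq n]
    {A : Matrix n n 𝕜} (hA : A.IsHermitian) (f : ℝ → ℝ) :
    (cfc f A).trace = ∑ i, (f (hA.eigenvalues i) : 𝕜) := by
  rw [hA.cfc_eq, IsHermitian.cfc, Unitary.conjStarAlgAut_apply, trace_mul_cycle,
    Unitary.coe_star_mul_self, one_mul, trace_diagonal]
  rfl

lemma matLog_eq_cfc {A : Matrix (Fin 2) (Fin 2) ℂ} (hA : A.IsHermitian) :
    matLog A = cfc Real.log A := by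
  rw [matLog, dif_pos hA, hA.cfc_eq, IsHermitian.cfc, Unitary.conjStarAlgAut_apply]
  rfl

lemma eq_half_one_add_sub_of_add_of_mul {p q r : ℝ} (hs : p + q = 1)
    (hp : p * q = (1 - r ^ 2) / 4) :
    (p = (1 + r) / 2 ∧ q = (1 - r) / 2) ∨ (p = (1 - r) / 2 ∧ q = (1 + r) / 2) := by
  obtain rfl : q = 1 - p := by linarith
  have h : (p - (1 + r) / 2) * (p - (1 - r) / 2) = 0 := by linear_combination -hp
  rcases mul_eq_zero.mp h with h | h
  · exact .inl ⟨by linarith, by linarith⟩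
  · exact .inr ⟨by linarith, by linarith⟩

lemma log_half_one_add_sub {r : ℝ} (hr : |r| < 1) :
    log ((1 + r) / 2) = (log ((1 - r ^ 2) / 4) + log ((1 + r) / (1 - r))) / 2 ∧
      log ((1 - r) / 2) = (log ((1 - r ^ 2) / 4) - log ((1 + r) / (1 - r))) / 2 := by
  obtain ⟨h₁, h₂⟩ := abs_lt.mp hr
  have ha : (1 + r) / 2 ≠ 0 := by linarith
  have hb : (1 - r) / 2 ≠ 0 := by linarith
  have hmul : log ((1 - r ^ 2) / 4) = log ((1 + r) / 2) + log ((1 - r) / 2) := by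
    rw [← log_mul ha hb]
    ring_nf
  have hdiv : log ((1 + r) / (1 - r)) = log ((1 + r) / 2) - log ((1 - r) / 2) := by
    rw [← log_div ha hb]
    congr 1
    field_simp
  constructor <;> linarith

section Bloch

variable (x : Fin 3 → ℝ) {r : ℝ}

lemma eigenvalues_bloch_one (hr : ∑ i, x i ^ 2 = r ^ 2) :
    let e := (bloch_one_isHermitian x).eigenvalues
    (e 0 = (1 + r) / 2 ∧ e 1 = (1 - r) / 2) ∨ (e 0 = (1 - r) / 2 ∧ e 1 = (1 + r) / 2) := by
  have hx := bloch_one_isHermitian x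
  apply eq_half_one_add_sub_of_add_of_mul
  · have h := hx.trace_eq_sum_eigenvalues
    rw [trace_bloch_one, Fin.sum_univ_two, RCLike.ofReal_eq_complex_ofReal] at h
    exact_mod_cast h.symm
  · have h := hx.det_eq_prod_eigenvalues
    rw [det_bloch_one, Fin.prod_univ_two, hr, RCLike.ofReal_eq_complex_ofReal] at h
    exact_mod_cast h.symm

lemma spectrum_bloch_one (hr : ∑ i, x i ^ 2 = r ^ 2) :
    spectrum ℝ (bloch 1 x) = {(1 + r) / 2, (1 - r) / 2} := by
  rw [(bloch_one_isHermitian x).spectrum_real_eq_range_eigenvalues]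
  ext t
  simp only [Set.mem_range, Fin.exists_fin_two, Set.mem_insert_iff, Set.mem_singleton_iff]
  rcases eigenvalues_bloch_one x hr with ⟨h0, h1⟩ | ⟨h0, h1⟩ <;> rw [h0, h1] <;> tauto

lemma trace_cfc_bloch_one (hr : ∑ i, x i ^ 2 = r ^ 2) (f : ℝ → ℝ) :
    (cfc f (bloch 1 x)).trace = (f ((1 + r) / 2) + f ((1 - r) / 2) : ℝ) := by
  rw [(bloch_one_isHermitian x).trace_cfc, Fin.sum_univ_two, RCLike.ofReal_eq_complex_ofReal,
    Complex.ofReal_add]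
  rcases eigenvalues_bloch_one x hr with ⟨h0, h1⟩ | ⟨h0, h1⟩ <;> rw [h0, h1]
  exact add_comm _ _

lemma trace_bloch_one_mul_matLog_self (hr : ∑ i, x i ^ 2 = r ^ 2) (hr1 : |r| < 1) :
    (bloch 1 x * matLog (bloch 1 x)).trace =
      ((r * log ((1 + r) / (1 - r)) + log ((1 - r ^ 2) / 4)) / 2 : ℝ) := by
  have hx := bloch_one_isHermitian x
  have hcont := (bloch 1 x).finite_real_spectrum.continuousOn (Y := ℝ)
  have hmul : bloch 1 x * cfc log (bloch 1 x) = cfc (fun t => t * log t) (bloch 1 x) := by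
    rw [cfc_mul _ _ _ (hcont _) (hcont _), cfc_id' ℝ (bloch 1 x) hx.isSelfAdjoint]
  rw [matLog_eq_cfc hx, hmul, trace_cfc_bloch_one x hr]
  obtain ⟨hp, hm⟩ := log_half_one_add_sub hr1
  rw [hp, hm]
  congr 1
  ring

lemma matLog_bloch_one (hr : ∑ i, x i ^ 2 = r ^ 2) (hr0 : r ≠ 0) (hr1 : |r| < 1) :
    matLog (bloch 1 x) =
      algebraMap ℝ _ ((log ((1 - r ^ 2) / 4) - log ((1 + r) / (1 - r)) / r) / 2) +
        (log ((1 + r) / (1 - r)) / r) • bloch 1 x := by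
  have hx := (bloch_one_isHermitian x).isSelfAdjoint
  set K := log ((1 + r) / (1 - r))
  have hlog : cfc log (bloch 1 x) =
      cfc (fun t => (log ((1 - r ^ 2) / 4) - K / r) / 2 + K / r * t) (bloch 1 x) := by
    apply cfc_congr
    obtain ⟨hp, hm⟩ := log_half_one_add_sub hr1
    rw [spectrum_bloch_one x hr]
    rintro t (rfl | rfl)
    · rw [hp]; field_simp; ring
    · rw [hm]; field_simp; ring
  rw [matLog_eq_cfc (bloch_one_isHermitian x), hlog, cfc_const_add _ _ _ (by fun_prop) hx,
    cfc_const_mul_id _ _ hx]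

lemma trace_bloch_one_mul_matLog_bloch_one (y : Fin 3 → ℝ) (hr : ∑ i, x i ^ 2 = r ^ 2)
    (hr0 : r ≠ 0) (hr1 : |r| < 1) :
    (bloch 1 y * matLog (bloch 1 x)).trace =
      ((log ((1 - r ^ 2) / 4) + (∑ i, y i * x i) / r * log ((1 + r) / (1 - r))) / 2 : ℝ) := by
  rw [matLog_bloch_one x hr hr0 hr1, Algebra.algebraMap_eq_smul_one, mul_add, mul_smul_comm,
    mul_smul_comm, mul_one, trace_add, trace_smul, trace_smul, trace_bloch_one,
    trace_bloch_one_mul_bloch_one, Complex.real_smul, Complex.real_smul]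
  push_cast
  ring

end Bloch

theorem qRelEnt_qubit_formula (xρ xσ : Fin 3 → ℝ)
    (hrρ : Real.sqrt (∑ i, xρ i ^ 2) < 1)
    (hrσ0 : 0 < Real.sqrt (∑ i, xσ i ^ 2))
    (hrσ : Real.sqrt (∑ i, xσ i ^ 2) < 1) :
    qRelEnt (bloch 1 xρ) (bloch 1 xσ) =
      (1 / 2) * (Real.sqrt (∑ i, xρ i ^ 2) *
          Real.logb 2 ((1 + Real.sqrt (∑ i, xρ i ^ 2)) / (1 - Real.sqrt (∑ i, xρ i ^ 2)))
        + Real.logb 2 ((1 - Real.sqrt (∑ i, xρ i ^ 2) ^ 2) / (1 - Real.sqrt (∑ i, xσ i ^ 2) ^ 2))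
        - ((∑ i, xρ i * xσ i) / Real.sqrt (∑ i, xσ i ^ 2)) *
          Real.logb 2 ((1 + Real.sqrt (∑ i, xσ i ^ 2)) / (1 - Real.sqrt (∑ i, xσ i ^ 2)))) := by
  set rρ := √(∑ i, xρ i ^ 2)
  set rσ := √(∑ i, xσ i ^ 2)
  have hsqρ : ∑ i, xρ i ^ 2 = rρ ^ 2 := (sq_sqrt (by positivity)).symm
  have hsqσ : ∑ i, xσ i ^ 2 = rσ ^ 2 := (sq_sqrt (by positivity)).symm
  have habsρ : |rρ| < 1 := abs_lt.mpr ⟨by linarith [sqrt_nonneg (∑ i, xρ i ^ 2)], hrρ⟩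
  have habsσ : |rσ| < 1 := abs_lt.mpr ⟨by linarith, hrσ⟩
  have hdet : log ((1 - rρ ^ 2) / (1 - rσ ^ 2)) =
      log ((1 - rρ ^ 2) / 4) - log ((1 - rσ ^ 2) / 4) := by
    have hρ2 := (sq_lt_one_iff_abs_lt_one rρ).mpr habsρ
    have hσ2 := (sq_lt_one_iff_abs_lt_one rσ).mpr habsσ
    rw [← log_div (by linarith) (by linarith)]
    congr 1
    field_simp
  rw [qRelEnt, mul_sub, trace_sub, trace_bloch_one_mul_matLog_self xρ hsqρ habsρ,
    trace_bloch_one_mul_matLog_bloch_one xσ xρ hsqσ hrσ0.ne' habsσ, ← Complex.ofReal_sub,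
    Complex.ofReal_re]
  simp only [logb, hdet]
  field_simp
  ring
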